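/- arXiv:2303.02644 — 2 statements merged into one kernel-verified Lean document; each statement's English description precedes it below -/
import Mathlib

section
/- For a single logit vector z ∈ R^K with a strict unique maximal coordinate z_{k*}, the function T ↦ σ^{(k*)}(z/T) is strictly decreasing on (0, ∞). -/
/-
Dividing numerator and denominator by `exp (z k* / T)` gives
`σ^(k*)(z/T) = (∑ₗ exp ((z l - z k*) / T))⁻¹`. Every exponent `(z l - z k*) / T` is `≤ 0` and
non-decreasing in `T`, strictly so for `l ≠ k*`; since `K ≥ 2` such an `l` exists, so the sum
increases strictly with `T` and its inverse decreases strictly.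
-/

noncomputable def softmax {K : ℕ} (z : Fin K → ℝ) (k : Fin K) : ℝ :=
  Real.exp (z k) / ∑ l, Real.exp (z l)

open Finset Real

theorem softmax_eq_inv_sum_exp_sub {K : ℕ} (z : Fin K → ℝ) (k : Fin K) :
    softmax z k = (∑ l, exp (z l - z k))⁻¹ := by
  rw [softmax, ← inv_div]
  simp only [exp_sub, ← sum_div]

section

variable {α : Type*} [Field α] [LinearOrder α] [IsStrictOrderedRing α] {a b c : α}

theorem div_lt_div_of_neg_left (ha : a < 0) (hb : 0 < b) (hbc : b < c) :
    a / b < a / c := by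
  simpa only [neg_div, neg_lt_neg_iff] using div_lt_div_of_pos_left (neg_pos.2 ha) hb hbc

theorem div_le_div_of_nonpos_left (ha : a ≤ 0) (hb : 0 < b) (hbc : b ≤ c) :
    a / b ≤ a / c := by
  simpa only [neg_div, neg_le_neg_iff] using div_le_div_of_nonneg_left (neg_nonneg.2 ha) hb hbc

end

theorem sum_exp_sub_div_lt_of_lt {ι : Type*} [Fintype ι] [Nontrivial ι] (z : ι → ℝ) (k : ι)
    (hmax : ∀ l, l ≠ k → z l < z k) {T₁ T₂ : ℝ} (hT₁ : 0 < T₁) (hT : T₁ < T₂) :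
    ∑ l, exp ((z l - z k) / T₁) < ∑ l, exp ((z l - z k) / T₂) := by
  have hmono : ∀ l, exp ((z l - z k) / T₁) ≤ exp ((z l - z k) / T₂) := by
    intro l
    rcases eq_or_ne l k with rfl | hl
    · simp
    · exact exp_le_exp.2 <| div_le_div_of_nonpos_left (sub_neg.2 (hmax l hl)).le hT₁ hT.le
  obtain ⟨l, hl⟩ := exists_ne k
  refine sum_lt_sum (fun l _ => hmono l) ⟨l, mem_univ l, ?_⟩
  exact exp_lt_exp.2 <| div_lt_div_of_neg_left (sub_neg.2 (hmax l hl)) hT₁ hT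

/-- For a logit vector with a strict unique maximal coordinate `z kstar`,
the confidence `T ↦ σ^(kstar)(z/T)` is strictly decreasing on `(0, ∞)`. -/
theorem stmt2 {K : ℕ} (z : Fin K → ℝ) (kstar : Fin K)
    (hmax : ∀ l, l ≠ kstar → z l < z kstar)
    (hK : 2 ≤ K) :
    StrictAntiOn (fun T : ℝ => softmax (fun l => z l / T) kstar) (Set.Ioi 0) := by
  have : Nontrivial (Fin K) := Fin.nontrivial_iff_two_le.2 hK
  intro T₁ hT₁ T₂ _ hT
  simp only [softmax_eq_inv_sum_exp_sub, ← sub_div]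
  exact inv_strictAnti₀ (sum_pos (fun l _ => exp_pos _) ⟨kstar, mem_univ _⟩)
    (sum_exp_sub_div_lt_of_lt z kstar hmax hT₁ hT)
end

section
/- In the binary case, the average confidence function T ↦ (1/n)∑_{i=1}^n max(σ(z_i/T), 1 − σ(z_i/T)) with logits z_i ∈ R \ {0} is continuous and strictly decreasing on (0,∞), with limits 1 as T → 0⁺ and 1/2 as T → ∞; hence for any target accuracy a ∈ (1/2, 1) there is a unique T_EC > 0 with average confidence equal to a. -/
/-!
Since `σ` is monotone and `σ(-t) = 1 - σ(t)`, the confidence of a logit `z` at temperature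
`T > 0` is `σ(|z| / T)`: a continuous, strictly decreasing function of `T` tending to
`σ(+∞) = 1` as `T → 0⁺` and to `σ(0) = 1/2` as `T → ∞`. Averaging preserves all of this, the
intermediate value theorem on the connected set `(0, ∞)` gives existence of `T_EC`, and strict
monotonicity its uniqueness.
-/

open Filter Topology Set

noncomputable def sigmoid (t : ℝ) : ℝ := 1 / (1 + Real.exp (-t))

lemma sigmoid_eq_real_sigmoid : sigmoid = Real.sigmoid :=
  funext fun _ => one_div _

lemma Real.max_sigmoid_one_sub_sigmoid (t : ℝ) :
    max (Real.sigmoid t) (1 - Real.sigmoid t) = Real.sigmoid |t| := by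
  rw [abs_eq_max_neg, Real.sigmoid_monotone.map_max, Real.sigmoid_neg]

lemma continuousOn_sigmoid_div (a : ℝ) :
    ContinuousOn (fun T => Real.sigmoid (a / T)) (Ioi 0) :=
  continuous_sigmoid.comp_continuousOn
    (continuousOn_const.div continuousOn_id fun _ hT => ne_of_gt hT)

lemma strictAntiOn_sigmoid_div {a : ℝ} (ha : 0 < a) :
    StrictAntiOn (fun T => Real.sigmoid (a / T)) (Ioi 0) :=
  Real.sigmoid_strictMono.comp_strictAntiOn fun _ hs _ _ hst => div_lt_div_of_pos_left ha hs hst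

lemma tendsto_sigmoid_div_nhdsGT_zero {a : ℝ} (ha : 0 < a) :
    Tendsto (fun T => Real.sigmoid (a / T)) (𝓝[>] 0) (𝓝 1) := by
  simp only [div_eq_mul_inv]
  exact Real.tendsto_sigmoid_atTop.comp (tendsto_inv_nhdsGT_zero.const_mul_atTop ha)

lemma tendsto_sigmoid_div_atTop (a : ℝ) :
    Tendsto (fun T => Real.sigmoid (a / T)) atTop (𝓝 (1 / 2)) := by
  rw [one_div, ← Real.sigmoid_zero]
  exact (continuous_sigmoid.tendsto 0).comp (tendsto_const_nhds.div_atTop tendsto_id)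

section Average

variable {α : Type*} {n : ℕ} {f : Fin n → α → ℝ}

lemma tendsto_average_of_forall_tendsto {l : Filter α} {c : ℝ} (hn : n ≠ 0)
    (hf : ∀ i, Tendsto (f i) l (𝓝 c)) :
    Tendsto (fun x => (1 / n : ℝ) * ∑ i, f i x) l (𝓝 c) := by
  convert (tendsto_finsetSum Finset.univ fun i _ => hf i).const_mul (1 / n : ℝ) using 2
  simp only [Finset.sum_const, Finset.card_univ, Fintype.card_fin, nsmul_eq_mul]
  field_simp

lemma strictAntiOn_average [Preorder α] {s : Set α} (hn : 0 < n)
    (hf : ∀ i, StrictAntiOn (f i) s) :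
    StrictAntiOn (fun x => (1 / n : ℝ) * ∑ i, f i x) s := by
  have : Nonempty (Fin n) := Fin.pos_iff_nonempty.mp hn
  intro x hx y hy hxy
  have hsum := Finset.sum_lt_sum_of_nonempty Finset.univ_nonempty fun i _ => hf i hx hy hxy
  exact mul_lt_mul_of_pos_left hsum (by positivity)

end Average

lemma existsUnique_pos_eq_of_strictAntiOn {g : ℝ → ℝ} {lo hi a : ℝ}
    (hc : ContinuousOn g (Ioi 0)) (hg : StrictAntiOn g (Ioi 0))
    (h0 : Tendsto g (𝓝[>] 0) (𝓝 hi)) (htop : Tendsto g atTop (𝓝 lo)) (ha : a ∈ Ioo lo hi) :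
    ∃! T, 0 < T ∧ g T = a := by
  obtain ⟨T, hT, rfl⟩ := isPreconnected_Ioi.intermediate_value_Ioo (l₂ := 𝓝[>] 0)
    (le_principal_iff.2 (Ioi_mem_atTop 0)) inf_le_right hc htop h0 ha
  exact ⟨T, ⟨hT, rfl⟩, fun T' ⟨hT', hT'T⟩ => hg.injOn hT' hT hT'T⟩

/-- In the binary case, the average confidence
`g(T) = (1/n)∑ max(σ(z_i/T), 1 − σ(z_i/T))` with nonzero logits `z_i` is
continuous and strictly decreasing on `(0, ∞)`, tends to `1` as `T → 0⁺` and to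
`1/2` as `T → ∞`; hence for any `a ∈ (1/2, 1)` there is a unique `T_EC > 0`
with `g(T_EC) = a`. -/
theorem stmt11 {n : ℕ} (hn : 0 < n) (z : Fin n → ℝ) (hz : ∀ i, z i ≠ 0) :
    ContinuousOn (fun T : ℝ => (1 / n : ℝ) * ∑ i, max (sigmoid (z i / T)) (1 - sigmoid (z i / T)))
      (Set.Ioi 0) ∧
    StrictAntiOn (fun T : ℝ => (1 / n : ℝ) * ∑ i, max (sigmoid (z i / T)) (1 - sigmoid (z i / T)))
      (Set.Ioi 0) ∧
    Tendsto (fun T : ℝ => (1 / n : ℝ) * ∑ i, max (sigmoid (z i / T)) (1 - sigmoid (z i / T)))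
      (nhdsWithin 0 (Set.Ioi 0)) (nhds 1) ∧
    Tendsto (fun T : ℝ => (1 / n : ℝ) * ∑ i, max (sigmoid (z i / T)) (1 - sigmoid (z i / T)))
      atTop (nhds (1 / 2)) ∧
    ∀ a ∈ Set.Ioo (1/2 : ℝ) 1, ∃! T : ℝ, 0 < T ∧
      (1 / n : ℝ) * ∑ i, max (sigmoid (z i / T)) (1 - sigmoid (z i / T)) = a := by
  set g := fun T : ℝ => (1 / n : ℝ) * ∑ i, max (sigmoid (z i / T)) (1 - sigmoid (z i / T))
  have hg : EqOn (fun T => (1 / n : ℝ) * ∑ i, Real.sigmoid (|z i| / T)) g (Ioi 0) :=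
    fun T (hT : 0 < T) => by
      simp only [g, sigmoid_eq_real_sigmoid, Real.max_sigmoid_one_sub_sigmoid, abs_div,
        abs_of_pos hT]
  have habs i : 0 < |z i| := abs_pos.2 (hz i)
  have hcont : ContinuousOn g (Ioi 0) :=
    (continuousOn_const.mul
      (continuousOn_finsetSum _ fun i _ => continuousOn_sigmoid_div |z i|)).congr hg.symm
  have hanti : StrictAntiOn g (Ioi 0) :=
    (strictAntiOn_average hn fun i => strictAntiOn_sigmoid_div (habs i)).congr hg
  have h0 : Tendsto g (𝓝[>] 0) (𝓝 1) :=
    (tendsto_average_of_forall_tendsto hn.ne' fun i =>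
      tendsto_sigmoid_div_nhdsGT_zero (habs i)).congr' (eventually_nhdsWithin_of_forall hg)
  have htop : Tendsto g atTop (𝓝 (1 / 2)) :=
    (tendsto_average_of_forall_tendsto hn.ne' fun i => tendsto_sigmoid_div_atTop |z i|).congr'
      (eventually_gt_atTop 0 |>.mono hg)
  exact ⟨hcont, hanti, h0, htop,
    fun a ha => existsUnique_pos_eq_of_strictAntiOn hcont hanti h0 htop ha⟩
end
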